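/- Let 0 < μ ≤ L and let f : ℝ^d → ℝ be a differentiable, L-smooth, μ-strongly convex function. Define the Itoh–Abe discrete gradient componentwise, for y, z ∈ ℝ^d with y_i ≠ z_i for all i, by (∇_IA f(y,z))_i = ( f(y₁,…,y_i, z_{i+1},…,z_d) - f(y₁,…,y_{i-1}, z_i,…,z_d) ) / (y_i - z_i). Then for all x, y, z ∈ ℝ^d with y_i ≠ z_i for every coordinate i, f(y) - f(x) ≤ ⟨∇_IA f(y,z), y - x⟩ + (dL²/μ - μ/4)‖y - z‖² - (μ/2)‖z - x‖² + (μ/4)‖y - x‖². (That is, ∇_IA f is a weak discrete gradient of f with parameters (α, β, γ) = (dL²/μ - μ/4, μ/2, -μ/4).) -/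

import Mathlib

open RealInnerProductSpace

section helpers

variable {E : Type*} [NormedAddCommGroup E] [InnerProductSpace ℝ E] [CompleteSpace E]

lemma grad_fderiv {f : E → ℝ} (hf : Differentiable ℝ f) (w v : E) :
    fderiv ℝ f w v = ⟪gradient f w, v⟫ := by
  have h : HasFDerivAt f ((InnerProductSpace.toDual ℝ E) (gradient f w)) w :=
    hasGradientAt_iff_hasFDerivAt.mp (hf w).hasGradientAt
  rw [h.fderiv]; simp [InnerProductSpace.toDual_apply_apply]

lemma hasDerivAt_comp_line {f : E → ℝ} (hf : Differentiable ℝ f) (v Δ : E) (t : ℝ) :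
    HasDerivAt (fun s : ℝ => f (s • Δ + v)) ⟪gradient f (t • Δ + v), Δ⟫ t := by
  have hc : HasDerivAt (fun s : ℝ => s • Δ + v) Δ t := by
    simpa using ((hasDerivAt_id t).smul_const Δ).add_const v
  have h : HasFDerivAt f ((InnerProductSpace.toDual ℝ E) (gradient f (t • Δ + v))) (t • Δ + v) :=
    hasGradientAt_iff_hasFDerivAt.mp (hf _).hasGradientAt
  simpa [InnerProductSpace.toDual_apply_apply, Function.comp_def] using h.comp_hasDerivAt t hc

lemma sc_grad_ineq {μ : ℝ} {f : E → ℝ} (hf : Differentiable ℝ f)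
    (hsc : ConvexOn ℝ Set.univ (fun y => f y - μ / 2 * ‖y‖ ^ 2)) (v w : E) :
    f v + ⟪gradient f v, w - v⟫ + μ / 2 * ‖w - v‖ ^ 2 ≤ f w := by
  set Δ := w - v with hΔ
  have hφc : ConvexOn ℝ Set.univ
      (fun s : ℝ => f (s • Δ + v) - μ / 2 * ‖s • Δ + v‖ ^ 2) := by
    have h := hsc.comp_affineMap (AffineMap.lineMap v w)
    have hEq : ∀ s : ℝ, (AffineMap.lineMap v w) s = s • Δ + v := by
      intro s; rw [AffineMap.lineMap_apply_module, hΔ]; module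
    simp only [Set.preimage_univ, Function.comp_def, hEq] at h
    exact h
  have hc0 : HasDerivAt (fun s : ℝ => s • Δ + v) Δ 0 := by
    simpa using ((hasDerivAt_id (0:ℝ)).smul_const Δ).add_const v
  have hnorm : HasDerivAt (fun s : ℝ => ‖s • Δ + v‖ ^ 2) (2 * ⟪v, Δ⟫) 0 := by
    have h2 := HasDerivAt.inner ℝ hc0 hc0
    simp only [zero_smul, zero_add] at h2
    have hEq : (fun s : ℝ => (inner ℝ (s • Δ + v) (s • Δ + v) : ℝ))
        = fun s : ℝ => ‖s • Δ + v‖ ^ 2 := by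
      funext s; rw [real_inner_self_eq_norm_sq]
    rw [hEq] at h2
    refine h2.congr_deriv ?_
    rw [real_inner_comm]; ring
  have hφd : HasDerivAt (fun s : ℝ => f (s • Δ + v) - μ / 2 * ‖s • Δ + v‖ ^ 2)
      (⟪gradient f v, Δ⟫ - μ * ⟪v, Δ⟫) 0 := by
    have h1 := hasDerivAt_comp_line hf v Δ 0
    simp only [zero_smul, zero_add] at h1
    have h3 := h1.sub (hnorm.const_mul (μ / 2))
    refine h3.congr_deriv ?_; ring
  have hs := hφc.le_slope_of_hasDerivAt (Set.mem_univ (0:ℝ)) (Set.mem_univ (1:ℝ))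
      one_pos hφd
  rw [slope_def_field] at hs
  simp only [one_smul, zero_smul, zero_add, sub_zero, div_one] at hs
  have hvw : Δ + v = w := by rw [hΔ]; abel
  rw [hvw] at hs
  have hexp : ‖Δ‖ ^ 2 = ‖w‖ ^ 2 - 2 * ⟪v, w⟫ + ‖v‖ ^ 2 := by
    rw [hΔ, ← real_inner_self_eq_norm_sq, ← real_inner_self_eq_norm_sq,
      ← real_inner_self_eq_norm_sq]
    simp only [inner_sub_left, inner_sub_right]
    rw [real_inner_comm w v]; ring
  have hinn : (⟪v, Δ⟫ : ℝ) = ⟪v, w⟫ - ‖v‖ ^ 2 := by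
    rw [hΔ, inner_sub_right, real_inner_self_eq_norm_sq]
  rw [hinn] at hs
  rw [hexp]; linarith [hs]

lemma descent_lemma {L : ℝ} {f : E → ℝ} (hf : Differentiable ℝ f)
    (hsmooth : ∀ x y, ‖gradient f x - gradient f y‖ ≤ L * ‖x - y‖) (v w : E) :
    f w ≤ f v + ⟪gradient f v, w - v⟫ + L / 2 * ‖w - v‖ ^ 2 := by
  set Δ := w - v with hΔ
  set ψ : ℝ → ℝ := fun t => f (t • Δ + v) - t * ⟪gradient f v, Δ⟫ - L / 2 * t ^ 2 * ‖Δ‖ ^ 2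
    with hψ
  have hψd : ∀ t : ℝ, HasDerivAt ψ
      (⟪gradient f (t • Δ + v), Δ⟫ - ⟪gradient f v, Δ⟫ - L * t * ‖Δ‖ ^ 2) t := by
    intro t
    have h1 := hasDerivAt_comp_line hf v Δ t
    have h2 : HasDerivAt (fun s : ℝ => s * ⟪gradient f v, Δ⟫) ⟪gradient f v, Δ⟫ t := by
      simpa using (hasDerivAt_id t).mul_const (⟪gradient f v, Δ⟫ : ℝ)
    have h3 : HasDerivAt (fun s : ℝ => L / 2 * s ^ 2 * ‖Δ‖ ^ 2) (L * t * ‖Δ‖ ^ 2) t := by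
      have := ((hasDerivAt_pow 2 t).const_mul (L / 2)).mul_const (‖Δ‖ ^ 2)
      refine this.congr_deriv ?_; ring
    exact (h1.sub h2).sub h3
  have hanti : AntitoneOn ψ (Set.Icc (0:ℝ) 1) := by
    apply antitoneOn_of_deriv_nonpos (convex_Icc 0 1)
    · exact (fun t _ => ((hψd t).differentiableAt).continuousAt.continuousWithinAt)
    · exact fun t _ => ((hψd t).differentiableAt).differentiableWithinAt
    · intro t ht
      rw [interior_Icc] at ht
      rw [(hψd t).deriv]
      have hb : (⟪gradient f (t • Δ + v) - gradient f v, Δ⟫ : ℝ) ≤ L * t * ‖Δ‖ ^ 2 := by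
        calc (⟪gradient f (t • Δ + v) - gradient f v, Δ⟫ : ℝ)
            ≤ ‖gradient f (t • Δ + v) - gradient f v‖ * ‖Δ‖ := real_inner_le_norm _ _
          _ ≤ (L * ‖(t • Δ + v) - v‖) * ‖Δ‖ := by
              apply mul_le_mul_of_nonneg_right _ (norm_nonneg _)
              exact hsmooth _ _
          _ = L * t * ‖Δ‖ ^ 2 := by
              rw [add_sub_cancel_right, norm_smul]
              simp [abs_of_pos ht.1]; ring
      rw [inner_sub_left] at hb
      linarith
  have h01 := hanti (Set.mem_Icc.mpr ⟨le_refl 0, zero_le_one⟩)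
      (Set.mem_Icc.mpr ⟨zero_le_one, le_refl 1⟩) zero_le_one
  have hψ0 : ψ 0 = f v := by simp [hψ]
  have hψ1 : ψ 1 = f w - ⟪gradient f v, Δ⟫ - L / 2 * ‖Δ‖ ^ 2 := by
    have h1 : (1:ℝ) • Δ + v = w := by rw [one_smul, hΔ]; abel
    simp only [hψ, h1, one_pow, one_mul, mul_one]
  rw [hψ0, hψ1] at h01
  linarith

lemma contraction {μ L : ℝ} (hμ : 0 < μ) (hμL : μ ≤ L) {f : E → ℝ}
    (hf : Differentiable ℝ f)
    (hsmooth : ∀ x y, ‖gradient f x - gradient f y‖ ≤ L * ‖x - y‖)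
    (hsc : ConvexOn ℝ Set.univ (fun y => f y - μ / 2 * ‖y‖ ^ 2)) (p q : E) :
    ‖(gradient f p - gradient f q) - ((L + μ) / 2) • (p - q)‖ ≤ (L - μ) / 2 * ‖p - q‖ := by
  set G : E → E := fun v => gradient f v - μ • v with hG
  have hexp : ∀ v w : E, ‖w - v‖ ^ 2 = ‖w‖ ^ 2 - 2 * ⟪v, w⟫ + ‖v‖ ^ 2 := by
    intro v w
    rw [norm_sub_sq_real, real_inner_comm]
  have hlow : ∀ v w : E, ⟪G v, w - v⟫ ≤ (f w - μ / 2 * ‖w‖ ^ 2) - (f v - μ / 2 * ‖v‖ ^ 2) := by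
    intro v w
    have h1 := sc_grad_ineq hf hsc v w
    have h2 : (⟪G v, w - v⟫ : ℝ) = ⟪gradient f v, w - v⟫ - μ * (⟪v, w⟫ - ‖v‖ ^ 2) := by
      rw [hG]
      simp only [inner_sub_left, real_inner_smul_left, inner_sub_right,
        real_inner_self_eq_norm_sq]
      ring
    rw [hexp v w] at h1
    rw [h2]
    nlinarith [h1]
  have hup : ∀ v w : E, (f w - μ / 2 * ‖w‖ ^ 2) - (f v - μ / 2 * ‖v‖ ^ 2)
      ≤ ⟪G v, w - v⟫ + (L - μ) / 2 * ‖w - v‖ ^ 2 := by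
    intro v w
    have h1 := descent_lemma hf hsmooth v w
    have h2 : (⟪G v, w - v⟫ : ℝ) = ⟪gradient f v, w - v⟫ - μ * (⟪v, w⟫ - ‖v‖ ^ 2) := by
      rw [hG]
      simp only [inner_sub_left, real_inner_smul_left, inner_sub_right,
        real_inner_self_eq_norm_sq]
      ring
    rw [hexp v w] at h1 ⊢
    rw [h2]
    nlinarith [h1]
  set G1 : E := G p - G q with hG1
  have hkey : ∀ t : ℝ, 2 * t * ‖G1‖ ^ 2 - (L - μ) * t ^ 2 * ‖G1‖ ^ 2 ≤ ⟪G1, p - q⟫ := by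
    intro t
    have h1 := hlow p (q + t • G1)
    have h2 := hup q (q + t • G1)
    have h3 := hlow q (p - t • G1)
    have h4 := hup p (p - t • G1)
    have e1 : q + t • G1 - p = (q - p) + t • G1 := by abel
    have e2 : q + t • G1 - q = t • G1 := by abel
    have e3 : p - t • G1 - q = (p - q) - t • G1 := by abel
    have e4 : p - t • G1 - p = -(t • G1) := by abel
    rw [e1] at h1; rw [e2] at h2; rw [e3] at h3; rw [e4] at h4
    have hn2 : ‖t • G1‖ ^ 2 = t ^ 2 * ‖G1‖ ^ 2 := by
      rw [norm_smul]; simp [mul_pow, sq_abs]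
    have hn4 : ‖-(t • G1)‖ ^ 2 = t ^ 2 * ‖G1‖ ^ 2 := by rw [norm_neg, hn2]
    rw [hn2] at h2; rw [hn4] at h4
    have hi1 : (⟪G p, (q - p) + t • G1⟫ : ℝ) = ⟪G p, q - p⟫ + t * ⟪G p, G1⟫ := by
      rw [inner_add_right, real_inner_smul_right]
    have hi2 : (⟪G q, t • G1⟫ : ℝ) = t * ⟪G q, G1⟫ := real_inner_smul_right _ _ _
    have hi3 : (⟪G q, (p - q) - t • G1⟫ : ℝ) = ⟪G q, p - q⟫ - t * ⟪G q, G1⟫ := by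
      rw [inner_sub_right, real_inner_smul_right]
    have hi4 : (⟪G p, -(t • G1)⟫ : ℝ) = - (t * ⟪G p, G1⟫) := by
      rw [inner_neg_right, real_inner_smul_right]
    rw [hi1] at h1; rw [hi2] at h2; rw [hi3] at h3; rw [hi4] at h4
    have hGG : (⟪G p, G1⟫ : ℝ) - ⟪G q, G1⟫ = ‖G1‖ ^ 2 := by
      rw [← inner_sub_left, ← hG1, real_inner_self_eq_norm_sq]
    have hpq : (⟪G1, p - q⟫ : ℝ) = ⟪G p, p - q⟫ - ⟪G q, p - q⟫ := by
      rw [hG1, inner_sub_left]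
    have hqp : (⟪G p, q - p⟫ : ℝ) = - ⟪G p, p - q⟫ := by
      rw [← inner_neg_right]; congr 1; abel
    rw [hqp] at h1
    have hGGt : t * ⟪G p, G1⟫ - t * ⟪G q, G1⟫ = t * ‖G1‖ ^ 2 := by
      rw [← mul_sub, hGG]
    linarith [h1, h2, h3, h4, hGGt, hpq]
  have hcoco : ‖G1‖ ^ 2 ≤ (L - μ) * ⟪G1, p - q⟫ := by
    rcases lt_or_eq_of_le hμL with hlt | heq
    · have hpos : 0 < L - μ := by linarith
      have hk := hkey (1 / (L - μ))
      have h2 : 2 * (1 / (L - μ)) * ‖G1‖ ^ 2 - (L - μ) * (1 / (L - μ)) ^ 2 * ‖G1‖ ^ 2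
          = ‖G1‖ ^ 2 / (L - μ) := by field_simp; ring
      rw [h2, div_le_iff₀ hpos] at hk
      linarith [hk]
    · have hz : L - μ = 0 := by linarith
      have hN : ‖G1‖ ^ 2 = 0 := by
        by_contra hne
        have hNpos : 0 < ‖G1‖ ^ 2 := lt_of_le_of_ne (by positivity) (Ne.symm hne)
        have hk := hkey ((⟪G1, p - q⟫ + 1) / (2 * ‖G1‖ ^ 2))
        rw [hz] at hk
        have h3 : 2 * ((⟪G1, p - q⟫ + 1) / (2 * ‖G1‖ ^ 2)) * ‖G1‖ ^ 2
            = ⟪G1, p - q⟫ + 1 := by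
          have hn : ‖G1‖ ≠ 0 := by rintro h0; rw [h0] at hNpos; norm_num at hNpos
          field_simp
        nlinarith [hk]
      rw [hz, hN]; simp
  have hvec : (gradient f p - gradient f q) - ((L + μ) / 2) • (p - q)
      = G1 - ((L - μ) / 2) • (p - q) := by
    rw [hG1, hG]
    module
  rw [hvec]
  have hc2 : (0:ℝ) ≤ (L - μ) / 2 * ‖p - q‖ := by
    have := norm_nonneg (p - q); nlinarith
  have hsq : ‖G1 - ((L - μ) / 2) • (p - q)‖ ^ 2 ≤ ((L - μ) / 2 * ‖p - q‖) ^ 2 := by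
    rw [norm_sub_sq_real, real_inner_smul_right, norm_smul]
    have habs : ‖(L - μ) / 2‖ = (L - μ) / 2 := by
      rw [Real.norm_eq_abs]; exact abs_of_nonneg (by linarith)
    rw [habs]
    nlinarith [hcoco]
  have h1 := Real.sqrt_le_sqrt hsq
  rwa [Real.sqrt_sq (norm_nonneg _), Real.sqrt_sq hc2] at h1

end helpers

lemma scalar_bound (L μ Pn a ui Ei r qi : ℝ) (hμ : 0 < μ) (hμL : μ ≤ L)
    (hqi : qi = -(Ei + (r + μ / 2 * ui)))
    (hElo : |Ei| ≤ (L - μ) / 2 * Pn)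
    (h1 : μ / 2 * ui ^ 2 ≤ r * ui) (h2 : r * ui ≤ L / 2 * ui ^ 2)
    (huine : ui ≠ 0) (hgeo : Pn ^ 2 + ui ^ 2 ≤ a ^ 2) (hPn0 : 0 ≤ Pn) :
    qi ^ 2 ≤ L ^ 2 * a ^ 2 := by
  have hA0 : (0:ℝ) ≤ (L - μ) / 2 := by linarith
  have hB0 : (0:ℝ) ≤ (L + μ) / 2 := by linarith
  have hui0 : (0:ℝ) < |ui| := abs_pos.mpr huine
  have hs : |r + μ / 2 * ui| ≤ (L + μ) / 2 * |ui| := by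
    have hpos : 0 ≤ (r + μ / 2 * ui) * ui := by nlinarith [sq_nonneg ui]
    have hup : (r + μ / 2 * ui) * ui ≤ (L + μ) / 2 * ui ^ 2 := by nlinarith
    have h3 : |r + μ / 2 * ui| * |ui| = (r + μ / 2 * ui) * ui := by
      rw [← abs_mul]; exact abs_of_nonneg hpos
    have h4 : |r + μ / 2 * ui| * |ui| ≤ ((L + μ) / 2 * |ui|) * |ui| := by
      rw [h3]
      calc (r + μ / 2 * ui) * ui ≤ (L + μ) / 2 * ui ^ 2 := hup
        _ = ((L + μ) / 2 * |ui|) * |ui| := by rw [← sq_abs ui]; ring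
    exact le_of_mul_le_mul_right h4 hui0
  have habs : |qi| ≤ (L - μ) / 2 * Pn + (L + μ) / 2 * |ui| := by
    rw [hqi, abs_neg]
    calc |Ei + (r + μ / 2 * ui)| ≤ |Ei| + |r + μ / 2 * ui| := abs_add_le _ _
      _ ≤ (L - μ) / 2 * Pn + (L + μ) / 2 * |ui| := add_le_add hElo hs
  have hsq : qi ^ 2 ≤ ((L - μ) / 2 * Pn + (L + μ) / 2 * |ui|) ^ 2 := by
    rw [← sq_abs qi]
    nlinarith [habs, abs_nonneg qi]
  have hsqabs : |ui| ^ 2 = ui ^ 2 := sq_abs ui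
  have hL0 : (0:ℝ) ≤ L := by linarith
  have hgeo' : Pn ^ 2 + |ui| ^ 2 ≤ a ^ 2 := by rw [hsqabs]; exact hgeo
  nlinarith [hsq, hgeo', hPn0, hui0.le, hA0, hB0,
    mul_nonneg (mul_nonneg hA0 hB0) (sq_nonneg (Pn - |ui|)),
    mul_nonneg (mul_nonneg hL0 hA0) (sub_nonneg.mpr hgeo'),
    mul_nonneg (mul_nonneg hL0 hB0) (sub_nonneg.mpr hgeo'),
    mul_nonneg (mul_nonneg hL0 hA0) (sq_nonneg (|ui|)),
    mul_nonneg (mul_nonneg hL0 hB0) (sq_nonneg Pn)]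

lemma final_assembly (fy fx fz gy gx gz iGz iU N a W b dL2 μ : ℝ)
    (hμ : 0 < μ)
    -- gy etc: ⟪g, y-z⟫ = gy ... we use abstract scalars
    (htel : gy = fy - fz)                     -- ⟪g, y-z⟫ = f y - f z
    (hsc : fz + iGz + μ / 2 * W ^ 2 ≤ fx)     -- strong convexity at z towards x
    (hsplit : gx = gy - gz)                   -- ⟪g,y-x⟫ = ⟪g,y-z⟫ - ⟪g,x-z⟫
    (hqt : -(N * W) ≤ iGz - gz - μ / 2 * iU)  -- -‖qt‖‖x-z‖ ≤ ⟪qt, x-z⟫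
    (hb : b ^ 2 = a ^ 2 - 2 * iU + W ^ 2)     -- ‖y-x‖² expansion
    (hN2 : N ^ 2 ≤ dL2 * a ^ 2)               -- ‖qt‖² ≤ dL² a²
    (hN0 : 0 ≤ N) (hW0 : 0 ≤ W) :
    fy - fx ≤ gx + (dL2 / μ - μ / 4) * a ^ 2 - μ / 2 * W ^ 2 + μ / 4 * b ^ 2 := by
  have hyoung : N * W - μ / 4 * W ^ 2 ≤ N ^ 2 / μ := by
    rw [le_div_iff₀ hμ]
    nlinarith [sq_nonneg (2 * N - μ * W)]
  have hq2 : N ^ 2 / μ ≤ dL2 * a ^ 2 / μ := by gcongr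
  have hid : dL2 * a ^ 2 / μ = dL2 / μ * a ^ 2 := by ring
  have hbμ : μ * b ^ 2 = μ * (a ^ 2 - 2 * iU + W ^ 2) := by rw [hb]
  have hNW : N * W ≤ dL2 / μ * a ^ 2 + μ / 4 * W ^ 2 := by
    have := le_trans hyoung (le_trans hq2 (le_of_eq hid))
    linarith
  nlinarith [hsc, htel, hsplit, hqt, hbμ, hNW]

/-- The Itoh–Abe discrete gradient is a weak discrete gradient of an `L`-smooth,
`μ`-strongly convex `f` with parameters `(α, β, γ) = (dL²/μ - μ/4, μ/2, -μ/4)`. -/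
theorem itoh_abe_weak_discrete_gradient {d : ℕ} (μ L : ℝ) (hμ : 0 < μ) (hμL : μ ≤ L)
    (f : EuclideanSpace ℝ (Fin d) → ℝ)
    (hf : Differentiable ℝ f)
    (hsmooth : ∀ x y, ‖gradient f x - gradient f y‖ ≤ L * ‖x - y‖)
    (hsc : ConvexOn ℝ Set.univ (fun y => f y - μ / 2 * ‖y‖ ^ 2))
    (gIA : EuclideanSpace ℝ (Fin d) → EuclideanSpace ℝ (Fin d) → EuclideanSpace ℝ (Fin d))
    (hgIA : ∀ y z : EuclideanSpace ℝ (Fin d), ∀ i : Fin d,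
      gIA y z i =
        (f (WithLp.toLp 2 (fun j => if j ≤ i then y j else z j))
          - f (WithLp.toLp 2 (fun j => if j < i then y j else z j))) / (y i - z i)) :
    ∀ x y z : EuclideanSpace ℝ (Fin d), (∀ i, y i ≠ z i) →
      f y - f x ≤ ⟪gIA y z, y - x⟫
        + ((d : ℝ) * L ^ 2 / μ - μ / 4) * ‖y - z‖ ^ 2
        - μ / 2 * ‖z - x‖ ^ 2 + μ / 4 * ‖y - x‖ ^ 2 := by
  intro x y z hyz
  set g : EuclideanSpace ℝ (Fin d) := gIA y z with hg
  -- staircase points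
  set P : Fin d → EuclideanSpace ℝ (Fin d) :=
    fun i => (WithLp.toLp 2 (fun j => if j < i then y j else z j) : EuclideanSpace ℝ (Fin d)) with hP
  set Q : Fin d → EuclideanSpace ℝ (Fin d) :=
    fun i => (WithLp.toLp 2 (fun j => if j ≤ i then y j else z j) : EuclideanSpace ℝ (Fin d)) with hQ
  have hgi : ∀ i : Fin d, g i = (f (Q i) - f (P i)) / (y i - z i) := fun i => hgIA y z i
  have hui : ∀ i : Fin d, y i - z i ≠ 0 := fun i => sub_ne_zero.mpr (hyz i)
  -- squared norm as coordinate sum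
  have hnormsq : ∀ v : EuclideanSpace ℝ (Fin d), ‖v‖ ^ 2 = ∑ j : Fin d, (v j) ^ 2 := by
    intro v
    rw [← real_inner_self_eq_norm_sq, PiLp.inner_apply]
    congr 1; funext j; rw [RCLike.inner_apply, conj_trivial, sq]
  -- (T2) each step value
  have hstep : ∀ i : Fin d, g i * (y i - z i) = f (Q i) - f (P i) := by
    intro i; rw [hgi i, div_mul_cancel₀ _ (hui i)]
  -- (T) telescoping
  set F : ℕ → ℝ := fun k => f (WithLp.toLp 2 (fun j : Fin d => if (j : ℕ) < k then y j else z j)) with hF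
  have hFQ : ∀ i : Fin d, f (Q i) = F ((i : ℕ) + 1) := by
    intro i
    rw [hQ, hF]
    refine congrArg f (congrArg (WithLp.toLp 2) (funext fun j => ?_))
    beta_reduce
    have hc : (j ≤ i) ↔ ((j : ℕ) < (i : ℕ) + 1) := by rw [Fin.le_def, Nat.lt_succ_iff]
    by_cases h : j ≤ i
    · rw [if_pos h, if_pos (hc.mp h)]
    · rw [if_neg h, if_neg (fun hh => h (hc.mpr hh))]
  have hFP : ∀ i : Fin d, f (P i) = F (i : ℕ) := by
    intro i
    rw [hP, hF]
    refine congrArg f (congrArg (WithLp.toLp 2) (funext fun j => ?_))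
    beta_reduce
    have hc : (j < i) ↔ ((j : ℕ) < (i : ℕ)) := Fin.lt_def
    by_cases h : j < i
    · rw [if_pos h, if_pos (hc.mp h)]
    · rw [if_neg h, if_neg (fun hh => h (hc.mpr hh))]
  have hFd : F d = f y := by
    rw [hF]
    exact congrArg f (congrArg (WithLp.toLp 2) (funext fun j => if_pos j.isLt))
  have hF0 : F 0 = f z := by
    rw [hF]
    exact congrArg f (congrArg (WithLp.toLp 2) (funext fun j => if_neg (Nat.not_lt_zero _)))
  have htel : (⟪g, y - z⟫ : ℝ) = f y - f z := by
    have h1 : (⟪g, y - z⟫ : ℝ) = ∑ i : Fin d, g i * (y i - z i) := by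
      rw [PiLp.inner_apply]
      simp [RCLike.inner_apply, PiLp.sub_apply, mul_comm]
    rw [h1]
    have h2 : ∀ i : Fin d, g i * (y i - z i) = F ((i : ℕ) + 1) - F (i : ℕ) := by
      intro i; rw [hstep i, hFQ i, hFP i]
    rw [Finset.sum_congr rfl (fun i _ => h2 i)]
    rw [Fin.sum_univ_eq_sum_range (fun k => F (k + 1) - F k) d]
    rw [Finset.sum_range_sub F d, hFd, hF0]
  -- (R1) Q i - P i
  have hQP : ∀ i : Fin d, Q i - P i = (y i - z i) • (EuclideanSpace.single i (1:ℝ)) := by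
    intro i
    ext j
    simp only [hP, hQ, PiLp.sub_apply, PiLp.smul_apply, EuclideanSpace.single_apply, smul_eq_mul]
    rcases lt_trichotomy j i with h | h | h
    · simp [h, le_of_lt h, h.ne]
    · subst h; simp [lt_irrefl]
    · simp [h.not_gt, (not_le.mpr h : ¬ j ≤ i), (ne_of_gt h : j ≠ i)]
  -- norms and inner products of the step
  have hQPnorm : ∀ i : Fin d, ‖Q i - P i‖ ^ 2 = (y i - z i) ^ 2 := by
    intro i
    rw [hQP i, norm_smul, Real.norm_eq_abs, EuclideanSpace.norm_single]
    simp [mul_pow, sq_abs]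
  have hinnerQP : ∀ (i : Fin d) (v : EuclideanSpace ℝ (Fin d)),
      (⟪v, Q i - P i⟫ : ℝ) = (y i - z i) * v i := by
    intro i v
    rw [hQP i, real_inner_smul_right, EuclideanSpace.inner_single_right]
    simp
  -- 1-D slope bounds along each coordinate
  have hrlow : ∀ i : Fin d,
      μ / 2 * (y i - z i) ^ 2 ≤ (g i - gradient f (P i) i) * (y i - z i) := by
    intro i
    have h1 := sc_grad_ineq hf hsc (P i) (Q i)
    rw [hinnerQP i, hQPnorm i] at h1
    have h2 := hstep i
    nlinarith [h1, h2]
  have hrhigh : ∀ i : Fin d,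
      (g i - gradient f (P i) i) * (y i - z i) ≤ L / 2 * (y i - z i) ^ 2 := by
    intro i
    have h1 := descent_lemma hf hsmooth (P i) (Q i)
    rw [hinnerQP i, hQPnorm i] at h1
    have h2 := hstep i
    nlinarith [h1, h2]
  -- contraction componentwise
  have hE : ∀ i : Fin d,
      |gradient f (P i) i - gradient f z i| ≤ (L - μ) / 2 * ‖P i - z‖ := by
    intro i
    have hX := contraction hμ hμL hf hsmooth hsc (P i) z
    set X : EuclideanSpace ℝ (Fin d) :=
      (gradient f (P i) - gradient f z) - ((L + μ) / 2) • (P i - z) with hXdef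
    have hXi : X i = gradient f (P i) i - gradient f z i := by
      rw [hXdef]
      simp only [PiLp.sub_apply, PiLp.smul_apply, smul_eq_mul]
      have : P i i - z i = 0 := by simp [hP, lt_irrefl]
      rw [this, mul_zero, sub_zero]
    have habs : |X i| ≤ ‖X‖ := by
      have h1 := abs_real_inner_le_norm X (EuclideanSpace.single i (1:ℝ))
      rw [EuclideanSpace.inner_single_right] at h1
      simpa using h1
    rw [← hXi]
    exact le_trans habs hX
  -- geometry of the staircase points
  have hPz : ∀ i : Fin d, ‖P i - z‖ ^ 2 + (y i - z i) ^ 2 ≤ ‖y - z‖ ^ 2 := by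
    intro i
    rw [hnormsq, hnormsq]
    have hco : ∀ j : Fin d, ((P i - z) j) ^ 2 = if j < i then (y j - z j) ^ 2 else 0 := by
      intro j
      by_cases hj : j < i
      · simp [hP, PiLp.sub_apply, hj]
      · simp [hP, PiLp.sub_apply, hj]
    rw [Finset.sum_congr rfl (fun j _ => hco j), ← Finset.sum_filter]
    have hsub : (Finset.filter (fun j => j < i) Finset.univ) ∪ {i} ⊆ Finset.univ :=
      Finset.subset_univ _
    have hnotmem : i ∉ Finset.filter (fun j => j < i) Finset.univ := by
      simp [lt_irrefl]
    have hins := Finset.sum_insert (f := fun j => (y j - z j) ^ 2) hnotmem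
    calc (∑ j ∈ Finset.filter (fun j => j < i) Finset.univ, (y j - z j) ^ 2)
          + (y i - z i) ^ 2
        = ∑ j ∈ insert i (Finset.filter (fun j => j < i) Finset.univ), (y j - z j) ^ 2 := by
          rw [hins]; ring
      _ ≤ ∑ j : Fin d, (y j - z j) ^ 2 := by
          apply Finset.sum_le_sum_of_subset_of_nonneg (Finset.subset_univ _)
          intro j _ _; positivity
      _ = ∑ j : Fin d, ((y - z) j) ^ 2 := by
          refine Finset.sum_congr rfl (fun j _ => ?_)
          rw [PiLp.sub_apply]
  -- the deviation vector
  set qt : EuclideanSpace ℝ (Fin d) :=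
    gradient f z - g - (μ / 2) • (y - z) with hqtdef
  have hqti : ∀ i : Fin d, qt i = gradient f z i - g i - μ / 2 * (y i - z i) := by
    intro i
    rw [hqtdef]
    simp [PiLp.sub_apply, PiLp.smul_apply]
  have hqtcomp : ∀ i : Fin d, (qt i) ^ 2 ≤ L ^ 2 * ‖y - z‖ ^ 2 := by
    intro i
    refine scalar_bound L μ ‖P i - z‖ ‖y - z‖ (y i - z i)
      (gradient f (P i) i - gradient f z i) (g i - gradient f (P i) i) (qt i) hμ hμL
      ?_ (hE i) (hrlow i) (hrhigh i) (hui i) (hPz i) (norm_nonneg _)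
    rw [hqti i]; ring
  have hqnorm : ‖qt‖ ^ 2 ≤ (d : ℝ) * L ^ 2 * ‖y - z‖ ^ 2 := by
    rw [hnormsq]
    calc (∑ j : Fin d, (qt j) ^ 2) ≤ ∑ _j : Fin d, L ^ 2 * ‖y - z‖ ^ 2 :=
          Finset.sum_le_sum (fun j _ => hqtcomp j)
      _ = (d : ℝ) * L ^ 2 * ‖y - z‖ ^ 2 := by
          rw [Finset.sum_const, Finset.card_univ, Fintype.card_fin, nsmul_eq_mul]; ring
  -- final assembly
  have hsc_zx := sc_grad_ineq hf hsc z x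
  have hsplit : (⟪g, y - x⟫ : ℝ) = ⟪g, y - z⟫ - ⟪g, x - z⟫ := by
    rw [← inner_sub_right]
    congr 1
    abel
  have hqtinner : (⟪qt, x - z⟫ : ℝ)
      = ⟪gradient f z, x - z⟫ - ⟪g, x - z⟫ - μ / 2 * ⟪y - z, x - z⟫ := by
    rw [hqtdef, inner_sub_left, inner_sub_left, real_inner_smul_left]
  have hqtlow : -(‖qt‖ * ‖x - z‖) ≤ (⟪qt, x - z⟫ : ℝ) := by
    have h1 := abs_real_inner_le_norm qt (x - z)
    have h2 := neg_abs_le (⟪qt, x - z⟫ : ℝ)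
    linarith
  have hqt' : -(‖qt‖ * ‖x - z‖)
      ≤ (⟪gradient f z, x - z⟫ : ℝ) - ⟪g, x - z⟫ - μ / 2 * ⟪y - z, x - z⟫ := by
    rw [← hqtinner]; exact hqtlow
  have hbexp : ‖y - x‖ ^ 2 = ‖y - z‖ ^ 2 - 2 * ⟪y - z, x - z⟫ + ‖x - z‖ ^ 2 := by
    have hxy : y - x = (y - z) - (x - z) := by abel
    rw [hxy, norm_sub_sq_real]
  have hzx : ‖z - x‖ = ‖x - z‖ := norm_sub_rev _ _
  rw [hzx]
  exact final_assembly (f y) (f x) (f z) ⟪g, y - z⟫ ⟪g, y - x⟫ ⟪g, x - z⟫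
    ⟪gradient f z, x - z⟫ ⟪y - z, x - z⟫ ‖qt‖ ‖y - z‖ ‖x - z‖ ‖y - x‖
    ((d : ℝ) * L ^ 2) μ hμ htel hsc_zx hsplit hqt' hbexp hqnorm
    (norm_nonneg _) (norm_nonneg _)
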